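/- Define the WF iterates f_{τ+1} = f_τ − μ̄·G(f_τ) from an arbitrary f_0 ∈ ℂ^N, where μ̄ = 1/L̄ with L̄ = λmax(A^H A) > 0 and G the generalized gradient of the amplitude loss L. Then for every T ≥ 0, Σ_{τ=0}^{T} ‖G(f_τ)‖₂² ≤ L̄·(L(f_0) − inf_{f ∈ ℂ^N} L(f)). -/

import Mathlib

open scoped BigOperators
open Matrix

noncomputable section

namespace AWF

/-- Complex signum: `z/|z|` for `z ≠ 0`, and `0` at `0`. -/
def csgn (z : ℂ) : ℂ := if z = 0 then 0 else z / ((‖z‖ : ℝ) : ℂ)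

variable {M N : ℕ}

/-- Amplitude loss `L(f) = ∑ (b_m − |(Af)_m|)²`. -/
def ampLoss (A : Matrix (Fin M) (Fin N) ℂ) (b : Fin M → ℝ) (f : Fin N → ℂ) : ℝ :=
  ∑ m, (b m - ‖A.mulVec f m‖) ^ 2

/-- Generalized (Wirtinger) gradient `G(f) = Aᴴ(Af − b ⊙ sgn(Af))`. -/
def wGrad (A : Matrix (Fin M) (Fin N) ℂ) (b : Fin M → ℝ) (f : Fin N → ℂ) : Fin N → ℂ :=
  Aᴴ.mulVec (fun m => A.mulVec f m - (b m : ℂ) * csgn (A.mulVec f m))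

/-- Euclidean (ℓ₂) norm of a complex vector. -/
def norm2 {n : ℕ} (v : Fin n → ℂ) : ℝ := Real.sqrt (∑ i, ‖v i‖ ^ 2)

/-- The largest eigenvalue of the positive semidefinite Hermitian matrix `Aᴴ A`. -/
def lamMax (A : Matrix (Fin M) (Fin N) ℂ) : ℝ :=
  ⨆ i, (Matrix.isHermitian_conjTranspose_mul_self A).eigenvalues i

end AWF

/-! The amplitude loss is majorized at `g` by the least-squares loss
`h ↦ ‖A h - b ⊙ sgn (A g)‖²` plus a constant, with equality at `h = g`, and the gradient of this
majorant at `g` is `G g`. As `λmax (AᴴA)` bounds its curvature, a step of size `1 / λmax`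
decreases the majorant, hence the loss, by at least `‖G g‖² / λmax`. Summing over the iterates
telescopes, and the last loss is at least `inf L`. -/

namespace Matrix

variable {m n 𝕜 : Type*} [RCLike 𝕜] [Fintype m] [Fintype n]

theorem sum_norm_sq_eq_re_dotProduct (v : n → 𝕜) :
    ∑ i, ‖v i‖ ^ 2 = RCLike.re (star v ⬝ᵥ v) := by
  simp [dotProduct, RCLike.conj_mul]

theorem IsHermitian.re_dotProduct_mulVec_le_iSup_eigenvalues [DecidableEq n]
    {H : Matrix n n 𝕜} (hH : H.IsHermitian) (v : n → 𝕜) :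
    RCLike.re (star v ⬝ᵥ H *ᵥ v) ≤ (⨆ i, hH.eigenvalues i) * RCLike.re (star v ⬝ᵥ v) := by
  open scoped MatrixOrder in
  have hle : H ≤ algebraMap ℝ (Matrix n n 𝕜) (⨆ i, hH.eigenvalues i) := by
    refine le_algebraMap_of_spectrum_le (fun x hx => ?_) hH.isSelfAdjoint
    rw [hH.spectrum_real_eq_range_eigenvalues] at hx
    obtain ⟨i, rfl⟩ := hx
    exact le_ciSup (Set.finite_range _).bddAbove i
  simpa [sub_mulVec, dotProduct_sub, algebraMap_eq_diagonal, Pi.algebraMap_def,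
    RCLike.algebraMap_eq_ofReal, RCLike.smul_re] using (Matrix.le_iff.mp hle).re_dotProduct_nonneg v

theorem re_dotProduct_mulVec_conjTranspose (A : Matrix m n 𝕜) (r : m → 𝕜) :
    RCLike.re (star r ⬝ᵥ A *ᵥ (Aᴴ *ᵥ r)) = ∑ j, ‖(Aᴴ *ᵥ r) j‖ ^ 2 := by
  rw [sum_norm_sq_eq_re_dotProduct, dotProduct_mulVec, star_mulVec, conjTranspose_conjTranspose]

theorem sum_norm_sq_sub_smul (u v : n → 𝕜) (c : ℝ) :
    ∑ i, ‖(u - c • v) i‖ ^ 2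
      = ∑ i, ‖u i‖ ^ 2 - 2 * c * RCLike.re (star u ⬝ᵥ v) + c ^ 2 * ∑ i, ‖v i‖ ^ 2 := by
  have hsymm : RCLike.re (star v ⬝ᵥ u) = RCLike.re (star u ⬝ᵥ v) := by
    rw [star_dotProduct, RCLike.star_def, RCLike.conj_re]
  simp only [sum_norm_sq_eq_re_dotProduct, star_sub, star_smul, star_trivial, sub_dotProduct,
    dotProduct_sub, smul_dotProduct, dotProduct_smul, map_sub, RCLike.smul_re, hsymm]
  ring

/-- A gradient step of size `1 / L` for `x ↦ ∑ ‖(A x - c) i‖²`, expressed through the residual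
`r = A x - c`, at which the gradient is `Aᴴ r`. -/
theorem sum_norm_sq_gradient_step (A : Matrix m n 𝕜) (r : m → 𝕜) {L : ℝ}
    (hL : ∀ v, ∑ i, ‖(A *ᵥ v) i‖ ^ 2 ≤ L * ∑ j, ‖v j‖ ^ 2) :
    ∑ i, ‖(r - L⁻¹ • A *ᵥ (Aᴴ *ᵥ r)) i‖ ^ 2 + L⁻¹ * ∑ j, ‖(Aᴴ *ᵥ r) j‖ ^ 2
      ≤ ∑ i, ‖r i‖ ^ 2 := by
  set G := Aᴴ *ᵥ r
  have hquad : L⁻¹ ^ 2 * ∑ i, ‖(A *ᵥ G) i‖ ^ 2 ≤ L⁻¹ * ∑ j, ‖G j‖ ^ 2 := by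
    calc L⁻¹ ^ 2 * ∑ i, ‖(A *ᵥ G) i‖ ^ 2 ≤ L⁻¹ ^ 2 * (L * ∑ j, ‖G j‖ ^ 2) := by
          gcongr; exact hL G
      _ = L⁻¹ * ∑ j, ‖G j‖ ^ 2 := by
          rcases eq_or_ne L 0 with hL0 | hL0
          · simp [hL0]
          · field_simp
  rw [sum_norm_sq_sub_smul, re_dotProduct_mulVec_conjTranspose]
  linarith

end Matrix

namespace AWF

theorem norm_csgn {z : ℂ} (hz : z ≠ 0) : ‖csgn z‖ = 1 := by
  rw [csgn, if_neg hz, norm_div, Complex.norm_real, norm_norm, div_self (norm_ne_zero_iff.mpr hz)]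

theorem norm_mul_csgn (z : ℂ) : (‖z‖ : ℂ) * csgn z = z := by
  by_cases hz : z = 0
  · simp [hz]
  · rw [csgn, if_neg hz, mul_div_cancel₀]
    exact_mod_cast norm_ne_zero_iff.mpr hz

/-- The extra `b²` when `y = 0` compensates for `csgn 0 = 0`. -/
def ampMajorant (b : ℝ) (y w : ℂ) : ℝ :=
  ‖w - b * csgn y‖ ^ 2 + if y = 0 then b ^ 2 else 0

theorem sq_sub_norm_le_ampMajorant {b : ℝ} (hb : 0 ≤ b) (y w : ℂ) :
    (b - ‖w‖) ^ 2 ≤ ampMajorant b y w := by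
  rw [ampMajorant]
  by_cases hy : y = 0
  · simp only [hy, csgn, if_true, mul_zero, sub_zero]
    nlinarith [mul_nonneg hb (norm_nonneg w)]
  · have hbs : ‖(b : ℂ) * csgn y‖ = b := by
      rw [norm_mul, norm_csgn hy, mul_one, Complex.norm_real, Real.norm_of_nonneg hb]
    have h := abs_norm_sub_norm_le w ((b : ℂ) * csgn y)
    rw [hbs, abs_sub_comm] at h
    rw [if_neg hy, add_zero, ← sq_abs]
    exact pow_le_pow_left₀ (abs_nonneg _) h 2

theorem ampMajorant_self (b : ℝ) (y : ℂ) : ampMajorant b y y = (b - ‖y‖) ^ 2 := by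
  rw [ampMajorant]
  by_cases hy : y = 0
  · simp [hy, csgn]
  · have h : y - b * csgn y = ((‖y‖ - b : ℝ) : ℂ) * csgn y := by
      push_cast
      rw [sub_mul, norm_mul_csgn]
    rw [if_neg hy, add_zero, h, norm_mul, norm_csgn hy, mul_one, Complex.norm_real,
      Real.norm_eq_abs, sq_abs]
    ring

variable {M N : ℕ}

theorem sum_norm_mulVec_sq_le_lamMax (A : Matrix (Fin M) (Fin N) ℂ) (v : Fin N → ℂ) :
    ∑ i, ‖(A *ᵥ v) i‖ ^ 2 ≤ lamMax A * ∑ j, ‖v j‖ ^ 2 := by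
  rw [sum_norm_sq_eq_re_dotProduct, sum_norm_sq_eq_re_dotProduct, star_mulVec,
    ← dotProduct_mulVec, mulVec_mulVec]
  exact (isHermitian_conjTranspose_mul_self A).re_dotProduct_mulVec_le_iSup_eigenvalues v

theorem norm2_sq {n : ℕ} (v : Fin n → ℂ) : norm2 v ^ 2 = ∑ i, ‖v i‖ ^ 2 :=
  Real.sq_sqrt (by positivity)

theorem bddBelow_range_ampLoss (A : Matrix (Fin M) (Fin N) ℂ) (b : Fin M → ℝ) :
    BddBelow (Set.range (ampLoss A b)) :=
  ⟨0, by rintro _ ⟨g, rfl⟩; unfold ampLoss; positivity⟩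

theorem ampLoss_gradient_step (A : Matrix (Fin M) (Fin N) ℂ) {b : Fin M → ℝ} (hb : ∀ m, 0 ≤ b m)
    (g : Fin N → ℂ) :
    ampLoss A b (g - (lamMax A)⁻¹ • wGrad A b g) + (lamMax A)⁻¹ * norm2 (wGrad A b g) ^ 2
      ≤ ampLoss A b g := by
  set c : Fin M → ℂ := fun m => b m * csgn ((A *ᵥ g) m)
  set e : ℝ := ∑ m, if (A *ᵥ g) m = 0 then b m ^ 2 else 0
  have hstep : ∑ m, ‖(A *ᵥ g - c - (lamMax A)⁻¹ • A *ᵥ wGrad A b g) m‖ ^ 2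
      + (lamMax A)⁻¹ * norm2 (wGrad A b g) ^ 2 ≤ ∑ m, ‖(A *ᵥ g - c) m‖ ^ 2 := by
    rw [norm2_sq]
    exact sum_norm_sq_gradient_step A _ (sum_norm_mulVec_sq_le_lamMax A)
  have hold : ampLoss A b g = ∑ m, ‖(A *ᵥ g - c) m‖ ^ 2 + e := by
    simp only [ampLoss, ← ampMajorant_self, ampMajorant, Finset.sum_add_distrib]
    rfl
  have hnew : ampLoss A b (g - (lamMax A)⁻¹ • wGrad A b g)
      ≤ ∑ m, ‖(A *ᵥ g - c - (lamMax A)⁻¹ • A *ᵥ wGrad A b g) m‖ ^ 2 + e :=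
    calc ampLoss A b (g - (lamMax A)⁻¹ • wGrad A b g)
        ≤ ∑ m, ampMajorant (b m) ((A *ᵥ g) m) ((A *ᵥ (g - (lamMax A)⁻¹ • wGrad A b g)) m) :=
          Finset.sum_le_sum fun m _ => sq_sub_norm_le_ampMajorant (hb m) _ _
      _ = _ := by
          simp only [ampMajorant, Finset.sum_add_distrib, mulVec_sub, mulVec_smul,
            sub_right_comm (A *ᵥ g) c]
          rfl
  linarith

/-- For WF iterates `f_{τ+1} = f_τ − μ̄ G(f_τ)` with `μ̄ = 1/L̄`,
`L̄ = λmax(AᴴA) > 0`: `∑_{τ=0}^T ‖G(f_τ)‖₂² ≤ L̄ (L(f_0) − inf L)`. -/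
theorem wf_sum_grad_bound
    {M N : ℕ} (A : Matrix (Fin M) (Fin N) ℂ) (b : Fin M → ℝ) (hb : ∀ m, 0 ≤ b m)
    (hpos : 0 < lamMax A)
    (f : ℕ → Fin N → ℂ)
    (hiter : ∀ τ, f (τ + 1) = f τ - (1 / lamMax A) • wGrad A b (f τ))
    (T : ℕ) :
    ∑ τ ∈ Finset.range (T + 1), norm2 (wGrad A b (f τ)) ^ 2
      ≤ lamMax A * (ampLoss A b (f 0) - ⨅ g : Fin N → ℂ, ampLoss A b g) := by
  have hstep : ∀ τ, norm2 (wGrad A b (f τ)) ^ 2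
      ≤ lamMax A * (ampLoss A b (f τ) - ampLoss A b (f (τ + 1))) := by
    intro τ
    have h := ampLoss_gradient_step A hb (f τ)
    rw [← one_div, ← hiter τ] at h
    calc norm2 (wGrad A b (f τ)) ^ 2
        = lamMax A * ((1 / lamMax A) * norm2 (wGrad A b (f τ)) ^ 2) := by field_simp
      _ ≤ lamMax A * (ampLoss A b (f τ) - ampLoss A b (f (τ + 1))) := by gcongr; linarith
  calc ∑ τ ∈ Finset.range (T + 1), norm2 (wGrad A b (f τ)) ^ 2
      ≤ ∑ τ ∈ Finset.range (T + 1), lamMax A * (ampLoss A b (f τ) - ampLoss A b (f (τ + 1))) :=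
        Finset.sum_le_sum fun τ _ => hstep τ
    _ = lamMax A * (ampLoss A b (f 0) - ampLoss A b (f (T + 1))) := by
        rw [← Finset.mul_sum, Finset.sum_range_sub' (fun τ => ampLoss A b (f τ))]
    _ ≤ lamMax A * (ampLoss A b (f 0) - ⨅ g : Fin N → ℂ, ampLoss A b g) := by
        gcongr
        exact ciInf_le (bddBelow_range_ampLoss A b) _

end AWF
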